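/- arXiv:1209.5482 — 11 statements merged into one kernel-verified Lean document; each statement's English description precedes it below -/
import Mathlib

section
/- Let R be an equivalence relation on a finite nonempty set U. The family I(R) = {X ⊆ U : R_*(X) = ∅} satisfies the matroid exchange property: if I₁, I₂ ∈ I(R) and |I₁| < |I₂|, then there exists e ∈ I₂ \ I₁ such that I₁ ∪ {e} ∈ I(R). -/
theorem stmt_2 {U : Type*} [Fintype U] [Nonempty U]
    (R : U → U → Prop) (hR : Equivalence R)
    (I₁ I₂ : Set U)
    (h1 : {x : U | {y : U | R x y} ⊆ I₁} = ∅)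
    (h2 : {x : U | {y : U | R x y} ⊆ I₂} = ∅)
    (hlt : I₁.ncard < I₂.ncard) :
    ∃ e ∈ I₂ \ I₁, {x : U | {y : U | R x y} ⊆ insert e I₁} = ∅ := by
  by_contra h
  push_neg at h
  -- not-in-I₁/I₂ extraction
  have not1 : ∀ x : U, ∃ y, R x y ∧ y ∉ I₁ := by
    intro x
    have : x ∉ ({x : U | {y : U | R x y} ⊆ I₁} : Set U) := by rw [h1]; exact id
    simpa [Set.subset_def] using this
  have not2 : ∀ x : U, ∃ y, R x y ∧ y ∉ I₂ := by
    intro x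
    have : x ∉ ({x : U | {y : U | R x y} ⊆ I₂} : Set U) := by rw [h2]; exact id
    simpa [Set.subset_def] using this
  -- for each e ∈ I₂ \ I₁, all of e's class except e lies in I₁
  have hprop : ∀ e ∈ I₂ \ I₁, ∀ w, R e w → w ≠ e → w ∈ I₁ := by
    intro e he w hRw hwe
    obtain ⟨x, hx⟩ := h e he
    simp only [Set.mem_setOf_eq, Set.subset_def] at hx
    obtain ⟨y, hxy, hy1⟩ := not1 x
    have hy : y ∈ insert e I₁ := hx y hxy
    rcases hy with rfl | hy
    · -- R x e
      have hxw : R x w := hR.trans hxy hRw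
      have := hx w hxw
      rcases this with h' | h'
      · exact absurd h' hwe
      · exact h'
    · exact absurd hy hy1
  have hz : ∀ e : U, ∃ z, e ∈ I₂ \ I₁ → z ∈ I₁ \ I₂ ∧ R e z := by
    intro e
    by_cases he : e ∈ I₂ \ I₁
    · obtain ⟨z, hez, hz2⟩ := not2 e
      refine ⟨z, fun _ => ⟨⟨?_, hz2⟩, hez⟩⟩
      have hze : z ≠ e := fun h' => hz2 (h' ▸ he.1)
      exact hprop e he z hez hze
    · exact ⟨e, fun h' => absurd h' he⟩
  choose f hf using hz
  have hmaps : Set.MapsTo f (I₂ \ I₁) (I₁ \ I₂) := fun e he => (hf e he).1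
  have hinj : Set.InjOn f (I₂ \ I₁) := by
    intro e he e' he' hfe
    by_contra hne
    have h1' := (hf e he).2
    have h2' := (hf e' he').2
    rw [hfe] at h1'
    have hee' : R e e' := hR.trans h1' (hR.symm h2')
    exact he'.2 (hprop e he e' hee' (Ne.symm hne))
  have hle : (I₂ \ I₁).ncard ≤ (I₁ \ I₂).ncard :=
    Set.ncard_le_ncard_of_injOn f hmaps hinj (Set.toFinite _)
  have e1 := Set.ncard_inter_add_ncard_diff_eq_ncard I₂ I₁ (Set.toFinite _)
  have e2 := Set.ncard_inter_add_ncard_diff_eq_ncard I₁ I₂ (Set.toFinite _)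
  rw [Set.inter_comm] at e1
  omega
end

section
/- Let R be an equivalence relation on a finite nonempty set U. The family I(R) = {X ⊆ U : R_*(X) = ∅} forms the independent sets of a matroid on U. -/
theorem stmt_3 {U : Type*} [Fintype U] [Nonempty U]
    (R : U → U → Prop) (hR : Equivalence R) :
    ∃ M : Matroid U, M.E = Set.univ ∧
      ∀ X : Set U, M.Indep X ↔ {x : U | {y : U | R x y} ⊆ X} = ∅ := by
  classical
  let s : Setoid U := ⟨R, hR⟩
  set Ind : Set U → Prop := fun X => ∀ x : U, ¬ {y | R x y} ⊆ X with hInd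
  have hempty : Ind ∅ := by
    intro x hx
    exact hx (hR.refl x)
  have hsub : ∀ ⦃I J : Set U⦄, Ind J → I ⊆ J → Ind I := by
    intro I J hJ hIJ x hx
    exact hJ x (hx.trans hIJ)
  have haug : ∀ ⦃I J : Set U⦄, Ind I → Ind J → I.ncard < J.ncard →
      ∃ e ∈ J, e ∉ I ∧ Ind (insert e I) := by
    intro I J hI hJ hlt
    by_contra hcon
    push_neg at hcon
    -- show J.ncard ≤ I.ncard, contradiction
    have hle : J.ncard ≤ I.ncard := by
      rw [Set.ncard_eq_toFinset_card' I, Set.ncard_eq_toFinset_card' J]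
      rw [Finset.card_eq_sum_card_fiberwise
        (f := Quotient.mk s) (t := Finset.univ) (fun x _ => Finset.mem_univ _),
        Finset.card_eq_sum_card_fiberwise (s := I.toFinset)
        (f := Quotient.mk s) (t := Finset.univ) (fun x _ => Finset.mem_univ _)]
      apply Finset.sum_le_sum
      intro q _
      by_cases hcase : ∀ x ∈ J, Quotient.mk s x = q → x ∈ I
      · apply Finset.card_le_card
        intro x hx
        rw [Finset.mem_filter, Set.mem_toFinset] at hx ⊢
        exact ⟨hcase x hx.1 hx.2, hx.2⟩
      · push_neg at hcase
        obtain ⟨e, heJ, heq, heI⟩ := hcase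
        have hx' := hcon e heJ heI
        rw [hInd] at hx'
        obtain ⟨x, hx⟩ := not_forall_not.1 hx'
        -- some z in [x] not in I, but in insert e I, so z = e and R x e
        obtain ⟨z, hz1, hz2⟩ := Set.not_subset.1 (hI x)
        have hze : z = e := by
          rcases hx hz1 with h | h
          · exact h
          · exact absurd h hz2
        have hxe : R x e := hze ▸ hz1
        have hclass : ∀ y, R e y → y = e ∨ y ∈ I := by
          intro y hy
          rcases hx (hR.trans hxe hy) with h | h
          · exact Or.inl h
          · exact Or.inr h
        obtain ⟨w, hw1, hw2⟩ := Set.not_subset.1 (hJ e)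
        -- fiber set
        have hJfib : J.toFinset.filter (fun a => Quotient.mk s a = q) ⊆
            ({y | R e y}).toFinset.erase w := by
          intro a ha
          rw [Finset.mem_filter, Set.mem_toFinset] at ha
          refine Finset.mem_erase.2 ⟨?_, ?_⟩
          · rintro rfl; exact hw2 ha.1
          · rw [Set.mem_toFinset]
            exact hR.symm (Quotient.eq.1 (ha.2.trans heq.symm))
        have hIfib : ({y | R e y}).toFinset.erase e ⊆
            I.toFinset.filter (fun a => Quotient.mk s a = q) := by
          intro a ha
          rw [Finset.mem_erase, Set.mem_toFinset] at ha
          rw [Finset.mem_filter, Set.mem_toFinset]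
          refine ⟨(hclass a ha.2).resolve_left ha.1, ?_⟩
          rw [← heq]
          exact Quotient.eq.2 (hR.symm ha.2)
        calc (J.toFinset.filter (fun a => Quotient.mk s a = q)).card
            ≤ (({y | R e y}).toFinset.erase w).card := Finset.card_le_card hJfib
          _ = ({y | R e y}).toFinset.card - 1 :=
            Finset.card_erase_of_mem (Set.mem_toFinset.2 hw1)
          _ = (({y | R e y}).toFinset.erase e).card :=
            (Finset.card_erase_of_mem (Set.mem_toFinset.2 (hR.refl e))).symm
          _ ≤ _ := Finset.card_le_card hIfib
    omega
  have hground : ∀ ⦃I : Set U⦄, Ind I → I ⊆ (Set.univ : Set U) :=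
    fun I _ => Set.subset_univ I
  refine ⟨(IndepMatroid.ofFinite Set.finite_univ Ind hempty hsub haug hground).matroid,
    rfl, fun X => ?_⟩
  rw [IndepMatroid.matroid_indep_iff, IndepMatroid.ofFinite_indep]
  constructor
  · intro h
    exact Set.eq_empty_iff_forall_notMem.2 fun x hx => h x hx
  · intro h x hx
    exact Set.eq_empty_iff_forall_notMem.1 h x hx
end

section
/- Let R be an equivalence relation on a finite nonempty set U, M(R) the matroid with independent sets {X ⊆ U : R_*(X) = ∅}, and B*(R) = {U \ B : B a base of M(R)}. Then B*(R) = {X ⊆ U : ∀ x ∈ U, |[x]_R ∩ X| = 1}. -/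
theorem stmt_7 {U : Type*} [Fintype U] [Nonempty U]
    (R : U → U → Prop) (hR : Equivalence R) :
    {X : Set U | ∃ B : Set U,
        ({x : U | {y : U | R x y} ⊆ B} = ∅ ∧
          ∀ Y : Set U, {x : U | {y : U | R x y} ⊆ Y} = ∅ → B ⊆ Y → B = Y) ∧
        X = Bᶜ}
      = {X : Set U | ∀ x : U, ({y : U | R x y} ∩ X).ncard = 1} := by
  ext X
  simp only [Set.mem_setOf_eq]
  constructor
  · rintro ⟨B, ⟨hind, hmax⟩, rfl⟩
    intro x
    rw [Set.eq_empty_iff_forall_notMem] at hind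
    have hne : ∃ a, R x a ∧ a ∈ Bᶜ := by
      by_contra h
      push_neg at h
      exact hind x (fun y hy => by
        by_contra hb
        exact (h y hy) hb)
    obtain ⟨a, hxa, haB⟩ := hne
    rw [Set.ncard_eq_one]
    refine ⟨a, ?_⟩
    ext b
    simp only [Set.mem_inter_iff, Set.mem_setOf_eq, Set.mem_singleton_iff]
    constructor
    · rintro ⟨hxb, hbB⟩
      by_contra hba
      have hind' : {z : U | {y : U | R z y} ⊆ B ∪ {b}} = ∅ := by
        rw [Set.eq_empty_iff_forall_notMem]
        intro z hz
        simp only [Set.mem_setOf_eq] at hz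
        by_cases hzb : R z b
        · have hza : R z a := hR.trans hzb (hR.trans (hR.symm hxb) hxa)
          rcases hz hza with h | h
          · exact haB h
          · exact hba h.symm
        · refine hind z (fun y hy => ?_)
          rcases hz hy with h | h
          · exact h
          · exact absurd (h ▸ hy) hzb
      have heq := hmax (B ∪ {b}) hind' Set.subset_union_left
      have : b ∈ B := heq ▸ Set.mem_union_right B rfl
      exact hbB this
    · rintro rfl
      exact ⟨hxa, haB⟩
  · intro hX
    refine ⟨Xᶜ, ⟨?_, ?_⟩, (compl_compl X).symm⟩
    · rw [Set.eq_empty_iff_forall_notMem]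
      intro x hx
      simp only [Set.mem_setOf_eq] at hx
      have h1 := hX x
      rw [Set.ncard_eq_one] at h1
      obtain ⟨c, hc⟩ := h1
      have : c ∈ {y : U | R x y} ∩ X := hc ▸ rfl
      exact (hx this.1) this.2
    · intro Y hYind hBY
      rw [Set.eq_empty_iff_forall_notMem] at hYind
      refine Set.Subset.antisymm hBY (fun a haY => ?_)
      by_contra haB
      have haX : a ∈ X := by simpa using haB
      -- [a] ∩ X = {a}
      have h1 := hX a
      rw [Set.ncard_eq_one] at h1
      obtain ⟨c, hc⟩ := h1
      have hac : a = c := by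
        have : a ∈ {y : U | R a y} ∩ X := ⟨hR.refl a, haX⟩
        rw [hc] at this
        exact this
      have hsub : {y : U | R a y} ⊆ Y := by
        intro y hy
        by_cases hyX : y ∈ X
        · have : y ∈ {y : U | R a y} ∩ X := ⟨hy, hyX⟩
          rw [hc] at this
          exact this ▸ (hac ▸ haY)
        · exact hBY hyX
      exact hYind a hsub
end

section
/- Let R be an equivalence relation on a finite nonempty set U and M*(R) the dual of the matroid M(R) induced by the lower approximation operator. Then the independent sets of M*(R) are exactly the partial transversals: I*(R) = {X ⊆ U : ∀ x ∈ U, |[x]_R ∩ X| ≤ 1}. -/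
theorem stmt_8 {U : Type*} [Fintype U] [Nonempty U]
    (R : U → U → Prop) (hR : Equivalence R) :
    {X : Set U | ∃ B : Set U,
        ({x : U | {y : U | R x y} ⊆ B} = ∅ ∧
          ∀ Y : Set U, {x : U | {y : U | R x y} ⊆ Y} = ∅ → B ⊆ Y → B = Y) ∧
        X ⊆ Bᶜ}
      = {X : Set U | ∀ x : U, ({y : U | R x y} ∩ X).ncard ≤ 1} := by
  classical
  ext X
  simp only [Set.mem_setOf_eq]
  constructor
  · rintro ⟨B, ⟨hB₁, hB₂⟩, hXB⟩ x
    rw [Set.ncard_le_one_iff (Set.toFinite _)]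
    rintro u v ⟨hxu, huX⟩ ⟨hxv, hvX⟩
    by_contra hne
    have huB : u ∉ B := hXB huX
    have hvB : v ∉ B := hXB hvX
    -- show insert v B still has no class inside, contradicting maximality
    have hY : {w : U | {y : U | R w y} ⊆ insert v B} = ∅ := by
      ext w
      simp only [Set.mem_setOf_eq, Set.mem_empty_iff_false, iff_false]
      intro hsub
      by_cases hwv : R w v
      · have hwu : R w u := hR.trans hwv (hR.trans (hR.symm hxv) hxu)
        have := hsub hwu
        rcases this with h | h
        · exact hne (h.symm ▸ rfl)
        · exact huB h
      · have : {y : U | R w y} ⊆ B := by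
          intro y hy
          rcases hsub hy with h | h
          · exact absurd (h ▸ hy) hwv
          · exact h
        have : w ∈ {x : U | {y : U | R x y} ⊆ B} := this
        rw [hB₁] at this
        exact this
    have := hB₂ (insert v B) hY (Set.subset_insert _ _)
    exact hvB (this ▸ Set.mem_insert v B)
  · intro hX
    set s : Setoid U := ⟨R, hR⟩ with hs
    have hRq : ∀ x : U, R (Quotient.mk s x).out x := fun x =>
      Quotient.exact (Quotient.out_eq (Quotient.mk s x))
    set chosen : Quotient s → U := fun q =>
      if h : ∃ y ∈ X, R q.out y then h.choose else q.out with hchosen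
    have hrel : ∀ q : Quotient s, R q.out (chosen q) := by
      intro q
      simp only [hchosen]
      split_ifs with h
      · exact h.choose_spec.2
      · exact hR.refl _
    have hcls : ∀ q : Quotient s, Quotient.mk s (chosen q) = q := by
      intro q
      exact (Quotient.sound (hR.symm (hrel q))).trans (Quotient.out_eq q)
    set T : Set U := Set.range chosen with hT
    have hxT : ∀ x : U, R x (chosen (Quotient.mk s x)) := fun x =>
      hR.trans (hR.symm (hRq x)) (hrel _)
    have hTuniq : ∀ u v : U, u ∈ T → v ∈ T → R u v → u = v := by
      rintro u v ⟨qu, rfl⟩ ⟨qv, rfl⟩ huv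
      have : qu = qv := by
        rw [← hcls qu, ← hcls qv]
        exact Quotient.sound huv
      rw [this]
    have hXT : X ⊆ T := by
      intro x hx
      have hex : ∃ y ∈ X, R (Quotient.mk s x).out y := ⟨x, hx, hRq x⟩
      have hcx : chosen (Quotient.mk s x) ∈ X := by
        simp only [hchosen, dif_pos hex]
        exact hex.choose_spec.1
      have h1 := hX x
      rw [Set.ncard_le_one_iff (Set.toFinite _)] at h1
      have : x = chosen (Quotient.mk s x) :=
        h1 ⟨hR.refl x, hx⟩ ⟨hxT x, hcx⟩
      rw [this]
      exact ⟨_, rfl⟩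
    refine ⟨Tᶜ, ⟨?_, ?_⟩, by simpa using hXT⟩
    · ext w
      simp only [Set.mem_setOf_eq, Set.mem_empty_iff_false, iff_false]
      intro hsub
      exact hsub (hxT w) ⟨_, rfl⟩
    · intro Y hY hTY
      apply Set.eq_of_subset_of_subset hTY
      intro y hyY
      have hynot : ¬ {z : U | R y z} ⊆ Y := by
        intro h
        have : y ∈ ({w : U | {z : U | R w z} ⊆ Y} : Set U) := h
        rw [hY] at this
        exact this
      obtain ⟨z, hyz, hzY⟩ := Set.not_subset.mp hynot
      have hzT : z ∈ T := by
        by_contra h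
        exact hzY (hTY h)
      intro hyT
      have : y = z := hTuniq y z (by simpa using hyT) hzT hyz
      exact hzY (this ▸ hyY)
end

section
/- Let R be an equivalence relation on a finite nonempty set U and M*(R) the dual of the matroid M(R) induced by the lower approximation operator. For every X ⊆ U, the rank of X in M*(R) equals the number of equivalence classes of R that intersect X, i.e., r_{M*(R)}(X) = |{[x]_R : x ∈ U, [x]_R ∩ X ≠ ∅}|. -/
theorem stmt_9 {U : Type*} [Fintype U] [Nonempty U]
    (R : U → U → Prop) (hR : Equivalence R) (X : Set U) :
    IsGreatest {n : ℕ | ∃ I ⊆ X, (∀ y : U, ({z : U | R y z} ∩ I).ncard ≤ 1) ∧ I.ncard = n}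
      ({C : Set U | (∃ x : U, C = {y : U | R x y}) ∧ (C ∩ X).Nonempty}.ncard) := by
  classical
  have hcls : ∀ x y : U, R x y → {z : U | R x z} = {z : U | R y z} := by
    intro x y hxy
    ext w
    exact ⟨fun h => hR.trans (hR.symm hxy) h, fun h => hR.trans hxy h⟩
  set T := {C : Set U | (∃ x : U, C = {y : U | R x y}) ∧ (C ∩ X).Nonempty} with hT
  have hTfin : T.Finite := Set.toFinite _
  let g : Set U → U := fun C => if h : (C ∩ X).Nonempty then h.some else Classical.arbitrary U
  have hg : ∀ C ∈ T, g C ∈ C ∩ X := by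
    intro C hC
    have h := hC.2
    simp only [g, dif_pos h]
    exact h.some_mem
  have hclassmem : ∀ (C : Set U), C ∈ T → ∀ z ∈ C, C = {w : U | R z w} := by
    intro C hC z hz
    obtain ⟨x, rfl⟩ := hC.1
    exact hcls x z hz
  have hginj : Set.InjOn g T := by
    intro C1 h1 C2 h2 heq
    have hz1 := (hg C1 h1).1
    have hz2 := (hg C2 h2).1
    rw [heq] at hz1
    exact (hclassmem C1 h1 (g C2) hz1).trans (hclassmem C2 h2 (g C2) hz2).symm
  constructor
  · refine ⟨g '' T, ?_, ?_, ?_⟩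
    · rintro z ⟨C, hC, rfl⟩
      exact (hg C hC).2
    · intro y
      rw [Set.ncard_le_one (Set.toFinite _)]
      rintro a ⟨ha, C1, h1, rfl⟩ b ⟨hb, C2, h2, rfl⟩
      have e1 : C1 = {w : U | R y w} := by
        rw [hclassmem C1 h1 (g C1) (hg C1 h1).1]
        exact (hcls y (g C1) ha).symm ▸ rfl
      have e2 : C2 = {w : U | R y w} := by
        rw [hclassmem C2 h2 (g C2) (hg C2 h2).1]
        exact (hcls y (g C2) hb).symm ▸ rfl
      rw [e1.trans e2.symm]
    · exact Set.ncard_image_of_injOn hginj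
  · rintro n ⟨I, hIX, hone, rfl⟩
    have hinj : Set.InjOn (fun z : U => {w : U | R z w}) I := by
      intro z1 h1 z2 h2 heq
      have heq' : {w : U | R z1 w} = {w : U | R z2 w} := heq
      have hz2 : z2 ∈ {w : U | R z1 w} := by rw [heq']; exact hR.refl z2
      have : ({w : U | R z1 w} ∩ I).ncard ≤ 1 := hone z1
      rw [Set.ncard_le_one (Set.toFinite _)] at this
      exact this z1 ⟨hR.refl z1, h1⟩ z2 ⟨hz2, h2⟩
    have hsub : (fun z : U => {w : U | R z w}) '' I ⊆ T := by
      rintro C ⟨z, hz, rfl⟩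
      show {w : U | R z w} ∈ T
      constructor
      · exact ⟨z, rfl⟩
      · exact ⟨z, hR.refl z, hIX hz⟩
    calc I.ncard = ((fun z : U => {w : U | R z w}) '' I).ncard :=
          (Set.ncard_image_of_injOn hinj).symm
      _ ≤ T.ncard := Set.ncard_le_ncard hsub hTfin
end

section
/- Let R be an equivalence relation on a finite nonempty set U and M*(R) the dual of the matroid induced by the lower approximation operator. For every x ∈ U, the contraction M*(R)/{x} and the contraction M*(R)/[x]_R have the same family of independent sets, namely {I ⊆ U \ [x]_R : ∀ y ∈ U, |[y]_R ∩ (I ∪ {x})| ≤ 1}. -/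
theorem stmt_11 {U : Type*} [Fintype U] [Nonempty U]
    (R : U → U → Prop) (hR : Equivalence R) (x : U) :
    {I : Set U | I ⊆ ({x} : Set U)ᶜ ∧
        ∀ y : U, ({z : U | R y z} ∩ (I ∪ {x})).ncard ≤ 1}
      = {I : Set U | I ⊆ {y : U | R x y}ᶜ ∧
          ∀ y : U, ({z : U | R y z} ∩ (I ∪ {x})).ncard ≤ 1} := by
  ext I
  simp only [Set.mem_setOf_eq]
  constructor
  · rintro ⟨h1, h2⟩
    refine ⟨fun z hz hRxz => ?_, h2⟩
    have hzx : z ≠ x := fun h => h1 hz (by simp [h])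
    have hsub : ({x, z} : Set U) ⊆ {w : U | R x w} ∩ (I ∪ {x}) := by
      intro w hw
      rcases hw with hw | hw
      · exact ⟨hw ▸ hR.refl x, Or.inr hw⟩
      · exact ⟨hw ▸ hRxz, Or.inl (hw ▸ hz)⟩
    have : ({x, z} : Set U).ncard ≤ ({w : U | R x w} ∩ (I ∪ {x})).ncard :=
      Set.ncard_le_ncard hsub (Set.toFinite _)
    rw [Set.ncard_pair (Ne.symm hzx)] at this
    exact absurd (le_trans this (h2 x)) (by norm_num)
  · rintro ⟨h1, h2⟩
    refine ⟨fun z hz hzx => ?_, h2⟩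
    exact h1 hz (by simpa using hzx ▸ hR.refl x)
end

section
/- Let R be an equivalence relation on a finite nonempty set U and M*(R) the dual of the matroid induced by the lower approximation operator. For every x ∈ U, the contractions M*(R)/{x} and M*(R)/[x]_R have the same bases. -/
lemma key_equiv {U : Type*} [Fintype U]
    (R : U → U → Prop) (hR : Equivalence R) (x : U) (I : Set U) :
    (I ⊆ ({x} : Set U)ᶜ ∧ ∀ y : U, ({z : U | R y z} ∩ (I ∪ {x})).ncard ≤ 1) ↔
    (I ⊆ {y : U | R x y}ᶜ ∧ ∀ y : U, ({z : U | R y z} ∩ (I ∪ {x})).ncard ≤ 1) := by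
  constructor
  · rintro ⟨h1, h2⟩
    refine ⟨?_, h2⟩
    intro a ha hRa
    have hax : a ≠ x := by
      intro h; exact h1 ha (by simp [h])
    have hsub : ({a, x} : Set U) ⊆ {z : U | R x z} ∩ (I ∪ {x}) := by
      rintro b hb
      simp only [Set.mem_insert_iff, Set.mem_singleton_iff] at hb
      rcases hb with hb | hb
      · exact ⟨by rw [hb]; exact hRa, Or.inl (by rw [hb]; exact ha)⟩
      · exact ⟨by rw [hb]; exact hR.refl x, Or.inr hb⟩
    have : (2 : ℕ) ≤ ({z : U | R x z} ∩ (I ∪ {x})).ncard := by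
      have h2card : ({a, x} : Set U).ncard = 2 := Set.ncard_pair hax
      calc (2:ℕ) = ({a, x} : Set U).ncard := h2card.symm
        _ ≤ _ := Set.ncard_le_ncard hsub (Set.toFinite _)
    have := h2 x
    omega
  · rintro ⟨h1, h2⟩
    refine ⟨?_, h2⟩
    intro a ha h
    exact h1 ha (by simp at h; simp [h, hR.refl x])

theorem stmt_13 {U : Type*} [Fintype U] [Nonempty U]
    (R : U → U → Prop) (hR : Equivalence R) (x : U) :
    {B : Set U |
        (B ⊆ ({x} : Set U)ᶜ ∧ ∀ y : U, ({z : U | R y z} ∩ (B ∪ {x})).ncard ≤ 1) ∧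
        ∀ I : Set U,
          (I ⊆ ({x} : Set U)ᶜ ∧ ∀ y : U, ({z : U | R y z} ∩ (I ∪ {x})).ncard ≤ 1) →
          B ⊆ I → B = I}
    = {B : Set U |
        (B ⊆ {y : U | R x y}ᶜ ∧ ∀ y : U, ({z : U | R y z} ∩ (B ∪ {x})).ncard ≤ 1) ∧
        ∀ I : Set U,
          (I ⊆ {y : U | R x y}ᶜ ∧ ∀ y : U, ({z : U | R y z} ∩ (I ∪ {x})).ncard ≤ 1) →
          B ⊆ I → B = I} := by
  ext B
  simp only [Set.mem_setOf_eq]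
  constructor
  · rintro ⟨hB, hmax⟩
    exact ⟨(key_equiv R hR x B).1 hB, fun I hI => hmax I ((key_equiv R hR x I).2 hI)⟩
  · rintro ⟨hB, hmax⟩
    exact ⟨(key_equiv R hR x B).2 hB, fun I hI => hmax I ((key_equiv R hR x I).1 hI)⟩
end

section
/- Let R be an equivalence relation on a finite nonempty set U and M*(R) the dual of the matroid induced by the lower approximation operator. For every x ∈ U and every X ⊆ U \ [x]_R, the ranks agree: r_{M*(R)/{x}}(X) = r_{M*(R)/[x]_R}(X). -/
/-- The rank function of the dual matroid `M*(R)`: the maximum cardinality of a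
partial transversal of the classes of `R` contained in `A`. -/
noncomputable def rkDual {U : Type*} (R : U → U → Prop) (A : Set U) : ℕ :=
  sSup {n : ℕ | ∃ I ⊆ A, (∀ y : U, ({z : U | R y z} ∩ I).ncard ≤ 1) ∧ I.ncard = n}

/- Contracting `x` and contracting its class `[x]` give the same rank because, in any partial
transversal inside `X ∪ [x]`, the at most one element lying in `[x]` can be exchanged for `x`. -/

def IsPartialTransversal {U : Type*} (R : U → U → Prop) (I : Set U) : Prop :=
  ∀ y : U, ({z : U | R y z} ∩ I).ncard ≤ 1

namespace rkDual

variable {U : Type*} {R : U → U → Prop}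

lemma le_of_subset [Finite U] {A I : Set U} (hIA : I ⊆ A) (hI : IsPartialTransversal R I) :
    I.ncard ≤ rkDual R A :=
  le_csSup ⟨Nat.card U, by rintro n ⟨J, -, -, rfl⟩; exact Set.ncard_le_card J⟩
    ⟨I, hIA, hI, rfl⟩

lemma le_of_forall {A : Set U} {m : ℕ}
    (h : ∀ I ⊆ A, IsPartialTransversal R I → I.ncard ≤ m) : rkDual R A ≤ m :=
  csSup_le ⟨0, ∅, Set.empty_subset _, by simp, by simp⟩
    (by rintro n ⟨I, hIA, hI, rfl⟩; exact h I hIA hI)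

lemma mono [Finite U] {A B : Set U} (h : A ⊆ B) : rkDual R A ≤ rkDual R B :=
  le_of_forall fun _ hIA hI => le_of_subset (hIA.trans h) hI

lemma eq_one_of_mem_of_subset_class [Finite U] {x : U} {A : Set U} (hxA : x ∈ A)
    (hA : A ⊆ {y : U | R x y}) : rkDual R A = 1 := by
  refine le_antisymm (le_of_forall fun I hIA hI => ?_) ?_
  · simpa [Set.inter_eq_self_of_subset_right (hIA.trans hA)] using hI x
  · have hx : IsPartialTransversal R {x} := fun y =>
      (Set.ncard_le_ncard Set.inter_subset_right).trans (Set.ncard_singleton x).le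
    simpa using le_of_subset (Set.singleton_subset_iff.mpr hxA) hx

lemma union_singleton_eq_union_class [Finite U] (hR : Equivalence R) (X : Set U) (x : U) :
    rkDual R (X ∪ {x}) = rkDual R (X ∪ {y : U | R x y}) := by
  set C := {y : U | R x y}
  refine le_antisymm (mono (Set.union_subset_union_right _
    (Set.singleton_subset_iff.mpr (hR.refl x)))) (le_of_forall fun I hIA hI => ?_)
  set I' := insert x (I \ C)
  have hxI' : x ∉ I \ C := fun h => h.2 (hR.refl x)
  have hI'A : I' ⊆ X ∪ {x} := by
    rintro z (rfl | ⟨hzI, hzC⟩)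
    · exact Or.inr rfl
    · exact Or.inl ((hIA hzI).resolve_right hzC)
  have hI' : IsPartialTransversal R I' := by
    intro y
    by_cases hyx : R y x
    · have hclass : {z : U | R y z} = C :=
        Set.ext fun z => ⟨hR.trans (hR.symm hyx), hR.trans hyx⟩
      have hsub : {z : U | R y z} ∩ I' ⊆ {x} := by
        rintro z ⟨hz, rfl | ⟨-, hzC⟩⟩
        · rfl
        · exact absurd (hclass ▸ hz) hzC
      exact (Set.ncard_le_ncard hsub).trans (Set.ncard_singleton x).le
    · have hsub : {z : U | R y z} ∩ I' ⊆ {z : U | R y z} ∩ I := by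
        rintro z ⟨hz, rfl | ⟨hzI, -⟩⟩
        · exact absurd hz hyx
        · exact ⟨hz, hzI⟩
      exact (Set.ncard_le_ncard hsub).trans (hI y)
  calc I.ncard = (I ∩ C).ncard + (I \ C).ncard :=
        (Set.ncard_inter_add_ncard_sdiff_eq_ncard I C).symm
    _ ≤ 1 + (I \ C).ncard := by
        gcongr
        rw [Set.inter_comm]
        exact hI x
    _ = I'.ncard := by rw [Set.ncard_insert_of_notMem hxI', add_comm]
    _ ≤ rkDual R (X ∪ {x}) := le_of_subset hI'A hI'

end rkDual

theorem stmt_14_general {U : Type*} [Fintype U]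
    (R : U → U → Prop) (hR : Equivalence R) (x : U)
    (X : Set U) :
    rkDual R (X ∪ {x}) - rkDual R ({x} : Set U)
      = rkDual R (X ∪ {y : U | R x y}) - rkDual R {y : U | R x y} := by
  rw [rkDual.union_singleton_eq_union_class hR X x,
    rkDual.eq_one_of_mem_of_subset_class (Set.mem_singleton x)
      (Set.singleton_subset_iff.mpr (hR.refl x)),
    rkDual.eq_one_of_mem_of_subset_class (A := {y : U | R x y}) (hR.refl x) subset_rfl]

theorem stmt_14 {U : Type*} [Fintype U] [Nonempty U]
    (R : U → U → Prop) (hR : Equivalence R) (x : U)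
    (X : Set U) (hX : X ⊆ {y : U | R x y}ᶜ) :
    rkDual R (X ∪ {x}) - rkDual R ({x} : Set U)
      = rkDual R (X ∪ {y : U | R x y}) - rkDual R {y : U | R x y} :=
  stmt_14_general R hR x X
end

section
/- Let R be an equivalence relation on a finite nonempty set U and M*(R) the dual of the matroid induced by the lower approximation operator. For every x ∈ U, every circuit of M*(R)/[x]_R is a circuit of M*(R)/{x}: C(M*(R)/[x]_R) ⊆ C(M*(R)/{x}). -/
theorem stmt_15 {U : Type*} [Fintype U] [Nonempty U]
    (R : U → U → Prop) (hR : Equivalence R) (x : U) (C : Set U)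
    (hC : (C ⊆ {y : U | R x y}ᶜ ∧
            ¬ ∀ y : U, ({z : U | R y z} ∩ (C ∪ {x})).ncard ≤ 1) ∧
          ∀ D : Set U,
            (D ⊆ {y : U | R x y}ᶜ ∧
              ¬ ∀ y : U, ({z : U | R y z} ∩ (D ∪ {x})).ncard ≤ 1) →
            D ⊆ C → D = C) :
    (C ⊆ ({x} : Set U)ᶜ ∧
      ¬ ∀ y : U, ({z : U | R y z} ∩ (C ∪ {x})).ncard ≤ 1) ∧
    ∀ D : Set U,
      (D ⊆ ({x} : Set U)ᶜ ∧
        ¬ ∀ y : U, ({z : U | R y z} ∩ (D ∪ {x})).ncard ≤ 1) →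
      D ⊆ C → D = C := by
  obtain ⟨⟨h1, h2⟩, hmin⟩ := hC
  refine ⟨⟨?_, h2⟩, ?_⟩
  · intro y hy hyx
    exact h1 hy (by simp only [Set.mem_singleton_iff] at hyx; subst hyx; exact hR.refl y)
  · rintro D ⟨_, hD2⟩ hDC
    exact hmin D ⟨hDC.trans h1, hD2⟩ hDC
end

section
/- Let R be an equivalence relation on a finite nonempty set U and M*(R) the dual of the matroid induced by the lower approximation operator. For every x ∈ U, the circuits of the restriction of M*(R)/{x} to U \ [x]_R coincide with the circuits of M*(R)/[x]_R. -/
theorem stmt_16 {U : Type*} [Fintype U] [Nonempty U]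
    (R : U → U → Prop) (hR : Equivalence R) (x : U) :
    {C : Set U |
        (C ⊆ {y : U | R x y}ᶜ ∧
          ¬ (C ⊆ ({x} : Set U)ᶜ ∧
              ∀ y : U, ({z : U | R y z} ∩ (C ∪ {x})).ncard ≤ 1)) ∧
        ∀ D : Set U,
          (D ⊆ {y : U | R x y}ᶜ ∧
            ¬ (D ⊆ ({x} : Set U)ᶜ ∧
                ∀ y : U, ({z : U | R y z} ∩ (D ∪ {x})).ncard ≤ 1)) →
          D ⊆ C → D = C}
    = {C : Set U |
        (C ⊆ {y : U | R x y}ᶜ ∧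
          ¬ ∀ y : U, ({z : U | R y z} ∩ (C ∪ {x})).ncard ≤ 1) ∧
        ∀ D : Set U,
          (D ⊆ {y : U | R x y}ᶜ ∧
            ¬ ∀ y : U, ({z : U | R y z} ∩ (D ∪ {x})).ncard ≤ 1) →
          D ⊆ C → D = C} := by
  have key : ∀ C : Set U, C ⊆ {y : U | R x y}ᶜ → C ⊆ ({x} : Set U)ᶜ := by
    intro C h y hy hxy
    rw [Set.mem_singleton_iff] at hxy
    exact h hy (hxy ▸ hR.refl y)
  have equiv : ∀ C : Set U,
      (C ⊆ {y : U | R x y}ᶜ ∧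
        ¬ (C ⊆ ({x} : Set U)ᶜ ∧
            ∀ y : U, ({z : U | R y z} ∩ (C ∪ {x})).ncard ≤ 1)) ↔
      (C ⊆ {y : U | R x y}ᶜ ∧
        ¬ ∀ y : U, ({z : U | R y z} ∩ (C ∪ {x})).ncard ≤ 1) := by
    intro C
    constructor
    · rintro ⟨h1, h2⟩
      exact ⟨h1, fun hall => h2 ⟨key C h1, hall⟩⟩
    · rintro ⟨h1, h2⟩
      exact ⟨h1, fun ⟨_, hall⟩ => h2 hall⟩
  ext C
  simp only [Set.mem_setOf_eq]
  constructor
  · rintro ⟨hC, hmin⟩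
    exact ⟨(equiv C).1 hC, fun D hD hDC => hmin D ((equiv D).2 hD) hDC⟩
  · rintro ⟨hC, hmin⟩
    exact ⟨(equiv C).2 hC, fun D hD hDC => hmin D ((equiv D).1 hD) hDC⟩
end

section
/- Let R be an equivalence relation on a finite nonempty set U and M(R) the matroid with independent sets {X ⊆ U : R_*(X) = ∅}. Then the rank of M(R) (the common cardinality of its bases) equals |U| minus the number of equivalence classes of R. -/
theorem stmt_19 {U : Type*} [Fintype U] [Nonempty U]
    (R : U → U → Prop) (hR : Equivalence R)
    (B : Set U)
    (hind : {x : U | {y : U | R x y} ⊆ B} = ∅)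
    (hmax : ∀ Y : Set U, {x : U | {y : U | R x y} ⊆ Y} = ∅ → B ⊆ Y → B = Y) :
    B.ncard = Fintype.card U - ({C : Set U | ∃ x : U, C = {y : U | R x y}}).ncard := by
  have hind' : ∀ x : U, ¬ ({y : U | R x y} ⊆ B) := by
    intro x hx
    have : x ∈ ({x : U | {y : U | R x y} ⊆ B} : Set U) := hx
    rw [hind] at this
    exact this
  -- each point outside B: its class equals class of any related point
  have hclass : ∀ a b : U, R a b → {y : U | R a y} = {y : U | R b y} := by
    intro a b hab
    ext z
    exact ⟨fun h => hR.trans (hR.symm hab) h, fun h => hR.trans hab h⟩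
  -- no two distinct points of Bᶜ are in the same class
  have huniq : ∀ a b : U, a ∉ B → b ∉ B → R a b → a = b := by
    intro a b ha hb hab
    by_contra hne
    have hY : {x : U | {y : U | R x y} ⊆ B ∪ {a}} = ∅ := by
      ext x
      simp only [Set.mem_setOf_eq, Set.mem_empty_iff_false, iff_false]
      intro hx
      by_cases hxa : R x a
      · have hxb : R x b := hR.trans hxa hab
        have := hx hxb
        rcases this with h | h
        · exact hb h
        · exact hne (((by simpa using h) : b = a).symm)
      · have : {y : U | R x y} ⊆ B := by
          intro y hy
          rcases hx hy with h | h
          · exact h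
          · simp only [Set.mem_singleton_iff] at h
            exact absurd (h ▸ hy) hxa
        exact hind' x this
    have heq := hmax (B ∪ {a}) hY (Set.subset_union_left)
    have ha2 : a ∈ B := by
      have ha' : a ∈ B ∪ {a} := Or.inr rfl
      rwa [← heq] at ha'
    exact ha ha2
  -- the set of classes is the image of Bᶜ under x ↦ [x]
  have himg : {C : Set U | ∃ x : U, C = {y : U | R x y}} =
      (fun x => {y : U | R x y}) '' Bᶜ := by
    ext C
    constructor
    · rintro ⟨x, rfl⟩
      obtain ⟨z, hz, hzB⟩ : ∃ z, R x z ∧ z ∉ B := by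
        by_contra h
        push_neg at h
        exact hind' x fun y hy => h y hy
      exact ⟨z, hzB, (hclass x z hz).symm⟩
    · rintro ⟨x, _, rfl⟩
      exact ⟨x, rfl⟩
  have hinj : Set.InjOn (fun x => {y : U | R x y}) Bᶜ := by
    intro a ha b hb hab
    have hab' : {y : U | R a y} = {y : U | R b y} := hab
    have : R a b := by
      have : b ∈ {y : U | R a y} := by rw [hab']; exact hR.refl b
      exact this
    exact huniq a b ha hb this
  have hcardimg : ({C : Set U | ∃ x : U, C = {y : U | R x y}}).ncard = Bᶜ.ncard := by
    rw [himg, Set.ncard_image_of_injOn hinj]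
  have hsum : B.ncard + Bᶜ.ncard = Fintype.card U := by
    simpa [Set.ncard_univ] using Set.ncard_add_ncard_compl B
  rw [hcardimg]
  omega
end
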